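/- arXiv:1901.07972 — 3 statements merged into one kernel-verified Lean document; each statement's English description precedes it below -/
import Mathlib

section
/- Let Σ be a countable Markov shift with shift map σ. If (μ_n) is a sequence of σ-invariant probability measures on Σ converging on cylinders to a sub-probability measure μ (i.e., μ_n(C) → μ(C) for every cylinder C), then μ is σ-invariant. -/
open MeasureTheory Filter Topology
open scoped NNReal ENNReal

/-- The underlying set of the countable Markov shift with transition matrix `B`. -/
def ShiftSet (B : ℕ → ℕ → Prop) : Set (ℕ → ℕ) := {x | ∀ n, B (x n) (x (n + 1))}

/-- The countable Markov shift determined by the transition matrix `B`,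
with the subspace topology of the product topology and the induced Borel structure. -/
abbrev Shift (B : ℕ → ℕ → Prop) : Type := ↥(ShiftSet B)

/-- The cylinder set determined by a finite word `w`. -/
def cyl (B : ℕ → ℕ → Prop) (w : List ℕ) : Set (Shift B) :=
  {x | ∀ j : Fin w.length, x.val j = w.get j}

/-- The shift map. -/
def shiftMap (B : ℕ → ℕ → Prop) : Shift B → Shift B :=
  fun x => ⟨fun n => x.val (n + 1), fun n => x.property (n + 1)⟩

/-- A measure is shift invariant if the measure of the preimage under the shift of
any Borel set coincides with the measure of the set. -/
def IsShiftInvariant (B : ℕ → ℕ → Prop) (μ : Measure (Shift B)) : Prop :=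
  ∀ s : Set (Shift B), MeasurableSet s → μ (shiftMap B ⁻¹' s) = μ s

section Aux

variable (B : ℕ → ℕ → Prop)

lemma measurable_coord (i : ℕ) : Measurable (fun x : Shift B => x.val i) :=
  (measurable_pi_apply i).comp measurable_subtype_coe

lemma measurable_shiftMap : Measurable (shiftMap B) :=
  Measurable.subtype_mk (measurable_pi_iff.2 fun n => measurable_coord B (n + 1))

lemma measurableSet_cyl (w : List ℕ) : MeasurableSet (cyl B w) := by
  have h : cyl B w = ⋂ j : Fin w.length, (fun x : Shift B => x.val j) ⁻¹' {w.get j} := by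
    ext x; simp [cyl, Set.mem_iInter]
  rw [h]
  exact MeasurableSet.iInter fun j => (measurable_coord B j) (measurableSet_singleton _)

lemma cyl_disjoint {w v : List ℕ} (hlen : w.length = v.length) (hne : w ≠ v) :
    Disjoint (cyl B w) (cyl B v) := by
  rw [Set.disjoint_left]
  intro x hw hv
  apply hne
  apply List.ext_get hlen
  intro n h1 h2
  have e1 := hw ⟨n, h1⟩
  have e2 := hv ⟨n, h2⟩
  simp only at e1 e2
  rw [← e1, ← e2]

lemma preimage_cyl (w : List ℕ) :
    shiftMap B ⁻¹' cyl B w = ⋃ a : ℕ, cyl B (a :: w) := by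
  ext x
  simp only [Set.mem_preimage, Set.mem_iUnion, cyl, Set.mem_setOf_eq]
  constructor
  · intro h
    refine ⟨x.val 0, fun j => ?_⟩
    refine Fin.cases ?_ (fun j' => ?_) j
    · rfl
    · exact h j'
  · rintro ⟨a, h⟩ j
    exact h j.succ

lemma cyl_nil : cyl B [] = Set.univ := by
  ext x; simp [cyl]

lemma coord_eq_iUnion (i a : ℕ) :
    {x : Shift B | x.val i = a} =
      ⋃ (v : Fin (i + 1) → ℕ) (_ : v (Fin.last i) = a), cyl B (List.ofFn v) := by
  ext x
  simp only [Set.mem_setOf_eq, Set.mem_iUnion]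
  constructor
  · intro h
    refine ⟨fun j => x.val j, h, fun j => ?_⟩
    rw [List.get_ofFn]
    rfl
  · rintro ⟨v, hv, hx⟩
    have hi : (i : ℕ) < (List.ofFn v).length := by simp
    have := hx ⟨i, hi⟩
    rw [List.get_ofFn] at this
    rw [this, ← hv]
    rfl

lemma generateFrom_cyl :
    (inferInstance : MeasurableSpace (Shift B)) =
      MeasurableSpace.generateFrom (Set.range (cyl B)) := by
  apply le_antisymm
  · have hcoord : ∀ i : ℕ, @Measurable (Shift B) ℕ
        (MeasurableSpace.generateFrom (Set.range (cyl B))) _ (fun x => x.val i) := by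
      intro i t _
      have h : (fun x : Shift B => x.val i) ⁻¹' t = ⋃ a ∈ t, {x : Shift B | x.val i = a} := by
        ext x; simp
      rw [h]
      refine MeasurableSet.biUnion (Set.to_countable t) (fun a _ => ?_)
      rw [coord_eq_iUnion]
      exact MeasurableSet.iUnion fun v => MeasurableSet.iUnion fun _ =>
        MeasurableSpace.measurableSet_generateFrom ⟨_, rfl⟩
    show MeasurableSpace.comap Subtype.val MeasurableSpace.pi ≤ _
    have hpi : (MeasurableSpace.pi : MeasurableSpace (ℕ → ℕ)) =
        ⨆ i : ℕ, MeasurableSpace.comap (fun x : ℕ → ℕ => x i) inferInstance := rfl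
    rw [hpi, MeasurableSpace.comap_iSup]
    refine iSup_le fun i => ?_
    rw [MeasurableSpace.comap_comp]
    exact measurable_iff_comap_le.mp (hcoord i)
  · exact MeasurableSpace.generateFrom_le (by rintro s ⟨w, rfl⟩; exact measurableSet_cyl B w)

lemma cyl_subset_of_inter {w v : List ℕ} (h : w.length ≤ v.length)
    (hne : (cyl B w ∩ cyl B v).Nonempty) : cyl B v ⊆ cyl B w := by
  obtain ⟨x, hw, hv⟩ := hne
  intro y hy j
  have h2 := hv (Fin.castLE h j)
  have h3 := hy (Fin.castLE h j)
  simp only [Fin.coe_castLE] at h2 h3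
  rw [h3, ← h2]
  exact (hw j).symm ▸ (hw j)

lemma isPiSystem_cyl : IsPiSystem (Set.range (cyl B)) := by
  rintro _ ⟨w, rfl⟩ _ ⟨v, rfl⟩ hne
  rcases le_total w.length v.length with h | h
  · rw [Set.inter_eq_self_of_subset_right (cyl_subset_of_inter B h hne)]
    exact ⟨v, rfl⟩
  · rw [Set.inter_eq_self_of_subset_left
      (cyl_subset_of_inter B h (by rwa [Set.inter_comm] at hne))]
    exact ⟨w, rfl⟩

end Aux

/-- if a sequence of shift-invariant probability measures converges on
cylinders to a sub-probability measure `μ`, then `μ` is shift-invariant. -/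
theorem stmt4 (B : ℕ → ℕ → Prop) (μs : ℕ → Measure (Shift B))
    [∀ n, IsProbabilityMeasure (μs n)] (hinv : ∀ n, IsShiftInvariant B (μs n))
    (μ : Measure (Shift B)) (hμ : μ Set.univ ≤ 1)
    (hconv : ∀ w : List ℕ, w ≠ [] →
        Tendsto (fun n => μs n (cyl B w)) atTop (𝓝 (μ (cyl B w)))) :
    IsShiftInvariant B μ := by
  have hmeas := measurable_shiftMap B
  haveI hfin : IsFiniteMeasure μ := ⟨lt_of_le_of_lt hμ ENNReal.one_lt_top⟩
  -- Step 1: μ(σ⁻¹ C) ≤ μ(C) for all nonempty-word cylinders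
  have hle : ∀ w : List ℕ, w ≠ [] → μ (shiftMap B ⁻¹' cyl B w) ≤ μ (cyl B w) := by
    intro w hw
    have hdisj : Pairwise (Function.onFun Disjoint fun a : ℕ => cyl B (a :: w)) := by
      intro a b hab
      exact cyl_disjoint B (by simp) (by simp [hab])
    rw [preimage_cyl, measure_iUnion hdisj (fun a => measurableSet_cyl B _)]
    rw [ENNReal.tsum_eq_iSup_sum]
    apply iSup_le
    intro F
    have hF : Tendsto (fun n => ∑ a ∈ F, μs n (cyl B (a :: w))) atTop
        (𝓝 (∑ a ∈ F, μ (cyl B (a :: w)))) :=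
      tendsto_finset_sum F fun a _ => hconv (a :: w) (by simp)
    refine le_of_tendsto_of_tendsto' hF (hconv w hw) (fun n => ?_)
    calc ∑ a ∈ F, μs n (cyl B (a :: w))
        ≤ ∑' a : ℕ, μs n (cyl B (a :: w)) := ENNReal.sum_le_tsum F
      _ = μs n (⋃ a : ℕ, cyl B (a :: w)) :=
          (measure_iUnion hdisj (fun a => measurableSet_cyl B _)).symm
      _ = μs n (shiftMap B ⁻¹' cyl B w) := by rw [preimage_cyl]
      _ = μs n (cyl B w) := hinv n _ (measurableSet_cyl B w)
  -- Step 2: equality via partition by cylinders of fixed length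
  have heq : ∀ w : List ℕ, w ≠ [] → μ (shiftMap B ⁻¹' cyl B w) = μ (cyl B w) := by
    intro w hw
    set s := w.length with hs
    have hsne : s ≠ 0 := by rw [hs, Ne, List.length_eq_zero_iff]; exact hw
    have hofn : ∀ v : Fin s → ℕ, List.ofFn v ≠ [] := by
      intro v hv
      apply hsne
      simpa using congrArg List.length hv
    have hdisj : Pairwise (Function.onFun Disjoint fun v : Fin s → ℕ => cyl B (List.ofFn v)) := by
      intro v v' hvv'
      exact cyl_disjoint B (by simp) (fun hcontra => hvv' (List.ofFn_injective hcontra))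
    have hpart : ⋃ v : Fin s → ℕ, cyl B (List.ofFn v) = Set.univ := by
      ext x
      simp only [Set.mem_iUnion, Set.mem_univ, iff_true]
      refine ⟨fun j => x.val j, fun j => ?_⟩
      rw [List.get_ofFn]; rfl
    have h2 : ∑' v : Fin s → ℕ, μ (cyl B (List.ofFn v)) = μ Set.univ := by
      rw [← measure_iUnion hdisj (fun v => measurableSet_cyl B _), hpart]
    have h1 : ∑' v : Fin s → ℕ, μ (shiftMap B ⁻¹' cyl B (List.ofFn v)) = μ Set.univ := by
      rw [← measure_iUnion (fun v v' h => (hdisj h).preimage _)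
        (fun v => hmeas (measurableSet_cyl B _)), ← Set.preimage_iUnion, hpart,
        Set.preimage_univ]
    have key : ∀ v : Fin s → ℕ, μ (shiftMap B ⁻¹' cyl B (List.ofFn v)) = μ (cyl B (List.ofFn v)) := by
      intro v
      by_contra hne
      have hlt : μ (shiftMap B ⁻¹' cyl B (List.ofFn v)) < μ (cyl B (List.ofFn v)) :=
        lt_of_le_of_ne (hle _ (hofn v)) hne
      have hfintsum : ∑' v : Fin s → ℕ, μ (shiftMap B ⁻¹' cyl B (List.ofFn v)) ≠ ⊤ := by
        rw [h1]; exact measure_ne_top μ _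
      have := ENNReal.tsum_lt_tsum hfintsum (fun v' => hle _ (hofn v')) hlt
      rw [h1, h2] at this
      exact lt_irrefl _ this
    have hw' : List.ofFn (fun j : Fin s => w.get j) = w := List.ofFn_get w
    calc μ (shiftMap B ⁻¹' cyl B w)
        = μ (shiftMap B ⁻¹' cyl B (List.ofFn (fun j : Fin s => w.get j))) := by rw [hw']
      _ = μ (cyl B (List.ofFn (fun j : Fin s => w.get j))) := key _
      _ = μ (cyl B w) := by rw [hw']
  -- Step 3: conclude via π-system uniqueness
  haveI : IsFiniteMeasure (μ.map (shiftMap B)) := by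
    constructor
    rw [Measure.map_apply hmeas MeasurableSet.univ]
    exact lt_of_le_of_lt hμ ENNReal.one_lt_top
  have hmap : μ.map (shiftMap B) = μ := by
    refine ext_of_generate_finite (Set.range (cyl B)) (generateFrom_cyl B)
      (isPiSystem_cyl B) ?_ ?_
    · rintro _ ⟨w, rfl⟩
      rw [Measure.map_apply hmeas (measurableSet_cyl B w)]
      rcases eq_or_ne w [] with rfl | hw
      · rw [cyl_nil, Set.preimage_univ]
      · exact heq w hw
    · rw [Measure.map_apply hmeas MeasurableSet.univ, Set.preimage_univ]
  intro t ht
  rw [← Measure.map_apply hmeas ht, hmap]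
end

section
/- Let Σ be a countable Markov shift and τ ∈ R (uniformly continuous, bounded away from zero, with inf{τ(x) : x_1 ≥ k} → ∞ as k → ∞). If shift-invariant probability measures (μ_n) converge on cylinders to a sub-probability measure μ and there is M with ∫ τ dμ_n ≤ M for all n, then μ(Σ) = 1, i.e., μ is a probability measure, and consequently μ_n → μ in the weak* topology. -/
open MeasureTheory Filter Topology
open scoped NNReal ENNReal

namespace Stmt16Aux

variable {B : ℕ → ℕ → Prop}

lemma mem_cyl_iff {w : List ℕ} {x : Shift B} :
    x ∈ cyl B w ↔ ∀ (j : ℕ) (h : j < w.length), x.val j = w[j] := by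
  constructor
  · intro h j hj; exact h ⟨j, hj⟩
  · rintro h ⟨j, hj⟩; exact h j hj

lemma cyl_nil : cyl B [] = Set.univ := by
  ext x; simp [cyl]

lemma measurableSet_cyl (w : List ℕ) : MeasurableSet (cyl B w) := by
  have : cyl B w = ⋂ j : Fin w.length, (fun x : Shift B => x.val (j : ℕ)) ⁻¹' {w.get j} := by
    ext x; simp [cyl, Set.mem_iInter]
  rw [this]
  exact MeasurableSet.iInter fun j =>
    ((measurable_pi_apply (j : ℕ)).comp measurable_subtype_coe) (measurableSet_singleton _)

lemma cyl_singleton (s : ℕ) : cyl B [s] = {x : Shift B | x.val 0 = s} := by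
  ext x
  constructor
  · intro h; exact h ⟨0, by simp⟩
  · rintro h ⟨j, hj⟩
    simp only [List.length_singleton] at hj
    have : j = 0 := by omega
    subst this
    exact h

/-- prefix word of `x` of length `m` -/
def pre (x : Shift B) (m : ℕ) : List ℕ := List.ofFn (fun j : Fin m => x.val j)

@[simp] lemma pre_length (x : Shift B) (m : ℕ) : (pre x m).length = m := by
  simp [pre]

lemma mem_cyl_pre {x y : Shift B} {m : ℕ} :
    y ∈ cyl B (pre x m) ↔ ∀ j < m, y.val j = x.val j := by
  rw [mem_cyl_iff]
  constructor
  · intro h j hj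
    have := h j (by simpa using hj)
    simpa [pre] using this
  · intro h j hj
    have hj' : j < m := by simpa using hj
    simpa [pre] using h j hj'

lemma take_pre (x : Shift B) {ℓ m : ℕ} (h : ℓ ≤ m) : (pre x m).take ℓ = pre x ℓ := by
  apply List.ext_getElem
  · simp [pre, Nat.min_eq_left h]
  · intro n h1 h2
    simp [pre, List.getElem_take]

lemma exists_minimal_word {G : Set (Shift B)} (hG : IsOpen G) (hGu : ¬ Set.univ ⊆ G)
    {x : Shift B} (hx : x ∈ G) :
    ∃ w : List ℕ, w ≠ [] ∧ cyl B w ⊆ G ∧ (∀ ℓ < w.length, ¬ cyl B (w.take ℓ) ⊆ G) ∧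
      x ∈ cyl B w := by
  classical
  obtain ⟨U, hUopen, hUG⟩ := isOpen_induced_iff.mp hG
  have hxU : x.val ∈ U := by rw [← hUG] at hx; exact hx
  obtain ⟨I, u, hIu, hpi⟩ := isOpen_pi_iff.mp hUopen x.val hxU
  set m := I.sup id + 1 with hm
  have hcylm : cyl B (pre x m) ⊆ G := by
    intro y hy
    rw [← hUG]
    apply hpi
    rw [Set.mem_pi]
    intro i hi
    have him : i < m := by
      have : i ≤ I.sup id := Finset.le_sup (f := id) hi
      omega
    have := mem_cyl_pre.mp hy i him
    rw [this]
    exact (hIu i hi).2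
  have hP : ∃ ℓ, ℓ ≠ 0 ∧ cyl B (pre x ℓ) ⊆ G := ⟨m, Nat.succ_ne_zero _, hcylm⟩
  obtain ⟨h1, h2⟩ := Nat.find_spec hP
  refine ⟨pre x (Nat.find hP), ?_, h2, ?_, mem_cyl_pre.mpr fun j _ => rfl⟩
  · intro hnil
    apply h1
    have := congrArg List.length hnil
    simpa using this
  · intro ℓ hℓ
    rw [pre_length] at hℓ
    rw [take_pre x hℓ.le]
    rcases Nat.eq_zero_or_pos ℓ with h0 | h0
    · subst h0
      have : pre x 0 = ([] : List ℕ) := by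
        apply List.eq_nil_of_length_eq_zero; simp
      rw [this, cyl_nil]
      exact hGu
    · intro hsub
      exact Nat.find_min hP hℓ ⟨by omega, hsub⟩

lemma eq_of_mem_both {G : Set (Shift B)} {w w' : List ℕ}
    (hw : w ≠ [] ∧ cyl B w ⊆ G ∧ ∀ ℓ < w.length, ¬ cyl B (w.take ℓ) ⊆ G)
    (hw' : w' ≠ [] ∧ cyl B w' ⊆ G ∧ ∀ ℓ < w'.length, ¬ cyl B (w'.take ℓ) ⊆ G)
    (hlen : w.length ≤ w'.length) {x : Shift B} (hxw : x ∈ cyl B w) (hxw' : x ∈ cyl B w') :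
    w = w' := by
  have hpref : w'.take w.length = w := by
    apply List.ext_getElem
    · simp [Nat.min_eq_left hlen]
    · intro n h1 h2
      rw [List.getElem_take]
      rw [← mem_cyl_iff.mp hxw' n (by omega), mem_cyl_iff.mp hxw n h2]
  rcases eq_or_lt_of_le hlen with heq | hlt
  · rw [← hpref, heq, List.take_length]
  · have h2 := hw.2.1
    rw [← hpref] at h2
    exact absurd h2 (hw'.2.2 w.length hlt)

end Stmt16Aux


/-- The class `R` of roof functions: uniformly continuous (in the shift metric), bounded
away from zero, with finite second variation, and tending to infinity as the first symbol
tends to infinity. -/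
def ClassR (B : ℕ → ℕ → Prop) (τ : Shift B → ℝ) : Prop :=
  (∀ ε > (0 : ℝ), ∃ N : ℕ, ∀ x y : Shift B,
      (∀ j < N, x.val j = y.val j) → |τ x - τ y| < ε) ∧
  (∃ c > (0 : ℝ), ∀ x, c ≤ τ x) ∧
  (∃ V : ℝ, ∀ x y : Shift B, x.val 0 = y.val 0 → x.val 1 = y.val 1 → |τ x - τ y| ≤ V) ∧
  (∀ M : ℝ, ∃ k : ℕ, ∀ x : Shift B, k ≤ x.val 0 → M ≤ τ x)

/-- The flow-invariant measure of the suspension flow with roof `τ` associated to a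
shift-invariant probability measure `μ` with `∫ τ dμ < ∞`: the normalized restriction of
`μ × Leb` to the region below the graph of `τ`. -/
noncomputable def suspMeasure (B : ℕ → ℕ → Prop) (τ : Shift B → ℝ)
    (μ : Measure (Shift B)) [SFinite μ] : Measure (Shift B × ℝ) :=
  (ENNReal.ofReal (∫ x, τ x ∂μ))⁻¹ •
    ((μ.prod volume).restrict {p : Shift B × ℝ | 0 ≤ p.2 ∧ p.2 < τ p.1})

/-- no escape of mass. If `τ ∈ R`, shift-invariant probability measures
`(μₙ)` converge on cylinders to a sub-probability measure `μ`, and the `τ`-integrals are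
uniformly bounded, then `μ` is a probability measure and `(μₙ)` converges to `μ` in the
weak* topology. -/
theorem stmt16 (B : ℕ → ℕ → Prop) (τ : Shift B → ℝ) (hτ : ClassR B τ)
    (μs : ℕ → Measure (Shift B)) [∀ n, IsProbabilityMeasure (μs n)]
    (hinv : ∀ n, IsShiftInvariant B (μs n)) (hint : ∀ n, Integrable τ (μs n))
    (M : ℝ) (hM : ∀ n, ∫ x, τ x ∂(μs n) ≤ M)
    (μ : Measure (Shift B)) (hμ : μ Set.univ ≤ 1)
    (hconv : ∀ w : List ℕ, w ≠ [] →
        Tendsto (fun n => μs n (cyl B w)) atTop (𝓝 (μ (cyl B w)))) :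
    μ Set.univ = 1 ∧
    ∀ f : BoundedContinuousFunction (Shift B) ℝ,
      Tendsto (fun n => ∫ x, f x ∂(μs n)) atTop (𝓝 (∫ x, f x ∂μ)) := by

  classical
  obtain ⟨_, ⟨c, hc, hcτ⟩, _, hτ4⟩ := hτ
  have hμ1 : μ Set.univ = 1 := by
    refine le_antisymm hμ ?_
    refine ENNReal.le_of_forall_pos_le_add fun ε hε _ => ?_
    have hεR : (0:ℝ) < (ε:ℝ) := hε
    set T : ℝ := max (M / (ε:ℝ)) 1 with hT
    have hT1 : (1:ℝ) ≤ T := le_max_right _ _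
    have hT0 : (0:ℝ) < T := lt_of_lt_of_le one_pos hT1
    obtain ⟨k, hk⟩ := hτ4 T
    set A : Set (Shift B) := (fun x : Shift B => x.val 0) ⁻¹' Set.Ici k with hA
    have hAm : MeasurableSet A :=
      ((measurable_pi_apply 0).comp measurable_subtype_coe) measurableSet_Ici
    have hMε : M ≤ (ε:ℝ) * T := by
      have h := le_max_left (M / (ε:ℝ)) 1
      rw [div_le_iff₀ hεR] at h
      calc M ≤ T * (ε:ℝ) := h
        _ = (ε:ℝ) * T := mul_comm _ _
    have hMarkov : ∀ n, μs n A ≤ (ε : ℝ≥0∞) := by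
      intro n
      have hTc : T * (μs n A).toReal ≤ M := by
        have hTint : IntegrableOn (fun _ : Shift B => T) A (μs n) := by
          exact integrableOn_const (measure_ne_top _ _) (by simp)
        have h2 : ∫ _ in A, T ∂(μs n) ≤ ∫ x in A, τ x ∂(μs n) :=
          setIntegral_mono_on hTint ((hint n).integrableOn) hAm (fun x hx => hk x hx)
        have h3 : ∫ x in A, τ x ∂(μs n) ≤ ∫ x, τ x ∂(μs n) :=
          setIntegral_le_integral (hint n)
            (Filter.Eventually.of_forall fun x => le_trans hc.le (hcτ x))
        have h4 : ∫ _ in A, T ∂(μs n) = ((μs n) A).toReal * T := by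
          rw [setIntegral_const, smul_eq_mul, measureReal_def]
        calc T * (μs n A).toReal = ∫ _ in A, T ∂(μs n) := by rw [h4, mul_comm]
          _ ≤ ∫ x in A, τ x ∂(μs n) := h2
          _ ≤ ∫ x, τ x ∂(μs n) := h3
          _ ≤ M := hM n
      have htr : (μs n A).toReal ≤ (ε:ℝ) := by
        nlinarith [ENNReal.toReal_nonneg (a := μs n A)]
      rw [← ENNReal.ofReal_coe_nnreal]
      exact (ENNReal.le_ofReal_iff_toReal_le (measure_ne_top _ _) ε.coe_nonneg).mpr htr
    have hAc : Aᶜ = ⋃ s ∈ Finset.range k, cyl B [s] := by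
      ext x
      simp only [Set.mem_compl_iff, Set.mem_preimage, Set.mem_Ici, not_le, Set.mem_iUnion,
        Finset.mem_range, Stmt16Aux.cyl_singleton, Set.mem_setOf_eq, hA]
      constructor
      · intro h; exact ⟨x.val 0, h, rfl⟩
      · rintro ⟨s, hs, h⟩; omega
    have hdisj : (↑(Finset.range k) : Set ℕ).PairwiseDisjoint (fun s => cyl B [s]) := by
      intro s _ t _ hst
      rw [Function.onFun, Set.disjoint_left]
      intro x hxs hxt
      rw [Stmt16Aux.cyl_singleton] at hxs hxt
      exact hst (hxs.symm.trans hxt)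
    have hsum : ∀ ν : Measure (Shift B), ν Aᶜ = ∑ s ∈ Finset.range k, ν (cyl B [s]) := by
      intro ν
      rw [hAc]
      exact measure_biUnion_finset hdisj fun s _ => Stmt16Aux.measurableSet_cyl _
    have htend : Tendsto (fun n => μs n Aᶜ) atTop (𝓝 (μ Aᶜ)) := by
      simp only [hsum]
      exact tendsto_finset_sum _ fun s _ => hconv [s] (by simp)
    have hlow : ∀ n, (1:ℝ≥0∞) ≤ μs n Aᶜ + ε := by
      intro n
      have h1 := measure_add_measure_compl (μ := μs n) hAm
      rw [measure_univ] at h1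
      calc (1:ℝ≥0∞) = μs n A + μs n Aᶜ := h1.symm
        _ ≤ ε + μs n Aᶜ := add_le_add_left (hMarkov n) _
        _ = μs n Aᶜ + ε := add_comm _ _
    have hμAc : (1:ℝ≥0∞) ≤ μ Aᶜ + ε :=
      ge_of_tendsto' (htend.add tendsto_const_nhds) hlow
    exact hμAc.trans (add_le_add_left (measure_mono (Set.subset_univ _)) _)
  haveI hprob : IsProbabilityMeasure μ := ⟨hμ1⟩
  refine ⟨hμ1, fun f => ?_⟩
  apply BoundedContinuousFunction.tendsto_integral_of_forall_integral_le_liminf_integral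
  intro g hg
  apply integral_le_liminf_integral_of_forall_isOpen_measure_le_liminf_measure hg
  intro G hGopen
  by_cases hGu : Set.univ ⊆ G
  · have hGeq : G = Set.univ := Set.eq_univ_of_univ_subset hGu
    rw [hGeq]
    simp only [measure_univ]
    rw [Filter.liminf_const]
  · set W : Set (List ℕ) :=
      {w | w ≠ [] ∧ cyl B w ⊆ G ∧ ∀ ℓ < w.length, ¬ cyl B (w.take ℓ) ⊆ G} with hW
    have hcover : G = ⋃ w ∈ W, cyl B w := by
      apply subset_antisymm
      · intro x hx
        obtain ⟨w, h1, h2, h3, h4⟩ := Stmt16Aux.exists_minimal_word hGopen hGu hx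
        exact Set.mem_biUnion (show w ∈ W from ⟨h1, h2, h3⟩) h4
      · exact Set.iUnion₂_subset fun w hw => hw.2.1
    have hdisjW : W.PairwiseDisjoint (fun w => cyl B w) := by
      intro w hw w' hw' hne
      rw [Function.onFun, Set.disjoint_left]
      intro x hxw hxw'
      rcases le_total w.length w'.length with h | h
      · exact hne (Stmt16Aux.eq_of_mem_both hw hw' h hxw hxw')
      · exact hne ((Stmt16Aux.eq_of_mem_both hw' hw h hxw' hxw).symm)
    have hμG : μ G = ∑' w : W, μ (cyl B w.1) := by
      rw [hcover]
      exact measure_biUnion (Set.to_countable W) hdisjW fun w _ => Stmt16Aux.measurableSet_cyl w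
    rw [hμG, ENNReal.tsum_eq_iSup_sum]
    refine iSup_le fun F => ?_
    have hFdisj : (↑F : Set ↥W).PairwiseDisjoint (fun w => cyl B w.1) :=
      fun a _ b _ hab => hdisjW a.2 b.2 (fun h => hab (Subtype.ext h))
    have hsum : ∀ n, ∑ w ∈ F, μs n (cyl B w.1) = μs n (⋃ w ∈ F, cyl B (w:↥W).1) := fun n =>
      (measure_biUnion_finset hFdisj fun w _ => Stmt16Aux.measurableSet_cyl _).symm
    have hsub : (⋃ w ∈ F, cyl B (w:↥W).1) ⊆ G := Set.iUnion₂_subset fun w _ => w.2.2.1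
    have htd : Tendsto (fun n => ∑ w ∈ F, μs n (cyl B w.1)) atTop
        (𝓝 (∑ w ∈ F, μ (cyl B w.1))) :=
      tendsto_finset_sum _ fun w _ => hconv w.1 w.2.1
    calc ∑ w ∈ F, μ (cyl B w.1)
        = Filter.liminf (fun n => ∑ w ∈ F, μs n (cyl B w.1)) atTop := htd.liminf_eq.symm
      _ ≤ Filter.liminf (fun n => μs n G) atTop :=
          Filter.liminf_le_liminf (Filter.Eventually.of_forall fun n => by
            rw [hsum n]; exact measure_mono hsub)
end

section
/- Let Σ be a countable Markov shift with a symbol i and q ∈ ℕ such that there are infinitely many admissible words of length q+1 starting and ending at i in which i appears only at the endpoints, and let τ ∈ R. Then the periodic measures μ_k associated to these words satisfy ∫ τ dμ_k → ∞ along a subsequence of distinct words; hence the corresponding flow-invariant measures converge on cylinders to the zero measure. -/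
open MeasureTheory Filter Topology
open scoped NNReal ENNReal

/-- The periodic measure equidistributed on the orbit of a periodic point `p` of period `m`. -/
noncomputable def periodicMeasure (B : ℕ → ℕ → Prop) (p : Shift B) (m : ℕ) :
    Measure (Shift B) :=
  (m : ℝ≥0∞)⁻¹ • ∑ j ∈ Finset.range m, Measure.dirac ((shiftMap B)^[j] p)


instance periodicMeasure.sfinite (B : ℕ → ℕ → Prop) (p : Shift B) (m : ℕ) :
    SFinite (periodicMeasure B p m) := by
  have h : ∀ s : Finset ℕ, SFinite (∑ j ∈ s, Measure.dirac ((shiftMap B)^[j] p)) := by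
    intro s
    induction s using Finset.induction_on with
    | empty => simpa using inferInstanceAs (SFinite (0 : Measure (Shift B)))
    | insert _ _ hns ih =>
        rw [Finset.sum_insert hns]
        haveI := ih
        infer_instance
  haveI := h (Finset.range m)
  unfold periodicMeasure
  infer_instance

/-- Admissible words of length `q+1` starting and ending at `i` in which `i` appears only
at the endpoints. -/
def loopWords (B : ℕ → ℕ → Prop) (i q : ℕ) : Set (List ℕ) :=
  {w | w.length = q + 1 ∧ w.head? = some i ∧ w.getLast? = some i ∧
    (∀ j, 0 < j → j < q → w.getD j 0 ≠ i) ∧ w.Chain' B}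

/-!
The loop word `w = w₀ ⋯ w_q` gives the periodic point `(w₀ ⋯ w_{q-1})^∞`, whose periodic
measure integrates `τ` to at least `τ (σʲ p) / q` for each `j < q`. Only finitely many words of
length `q + 1` have all their letters below a given `K`, so along any injective sequence of loop
words some letter eventually exceeds `K`; as `τ` tends to infinity with the first symbol, the
integrals tend to infinity. The suspension measure of a set inside `{0 ≤ t ≤ c}` is at most
`c / ∫ τ dμ`, hence tends to zero.
-/

lemma shiftMap_iterate_val {B : ℕ → ℕ → Prop} (m : ℕ) (x : Shift B) (n : ℕ) :
    ((shiftMap B)^[m] x).val n = x.val (n + m) := by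
  induction m generalizing x with
  | zero => rfl
  | succ m ih => rw [Function.iterate_succ_apply, ih]; rfl

section LoopWords

variable {B : ℕ → ℕ → Prop} {i q : ℕ} {w : List ℕ}

lemma getD_mod_of_mem_loopWords (hw : w ∈ loopWords B i q) {j : ℕ} (hj : j ≤ q) :
    w.getD (j % q) 0 = w.getD j 0 := by
  obtain ⟨hlen, hhead, hlast, -, -⟩ := hw
  rcases hj.lt_or_eq with hj | rfl
  · rw [Nat.mod_eq_of_lt hj]
  · have hw0 : w ≠ [] := List.ne_nil_of_length_pos (by omega)
    rw [Nat.mod_self, List.getD_eq_getElem _ _ (by omega), List.getD_eq_getElem _ _ (by omega),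
      List.getElem_zero, ← Option.some_inj, ← List.head?_eq_some_head, hhead]
    rw [List.getLast?_eq_getElem?, hlen, Nat.add_sub_cancel,
      List.getElem?_eq_getElem (by omega)] at hlast
    exact hlast.symm

lemma mem_shiftSet_of_mem_loopWords (hq : 0 < q) (hw : w ∈ loopWords B i q) :
    (fun n => w.getD (n % q) 0) ∈ ShiftSet B := by
  intro n
  have hr : n % q < q := Nat.mod_lt n hq
  have hstep : B (w.getD (n % q) 0) (w.getD (n % q + 1) 0) := by
    have := List.isChain_iff_getElem.mp hw.2.2.2.2 (n % q) (by rw [hw.1]; omega)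
    rwa [List.getD_eq_getElem _ _ (by rw [hw.1]; omega),
      List.getD_eq_getElem _ _ (by rw [hw.1]; omega)]
  simpa only [Nat.add_mod n 1 q, Nat.mod_mod, Nat.add_mod_mod,
    getD_mod_of_mem_loopWords hw (show n % q + 1 ≤ q by omega)] using hstep

def loopPoint (hq : 0 < q) (hw : w ∈ loopWords B i q) : Shift B :=
  ⟨fun n => w.getD (n % q) 0, mem_shiftSet_of_mem_loopWords hq hw⟩

variable (hq : 0 < q) (hw : w ∈ loopWords B i q)

lemma shiftMap_iterate_loopPoint : (shiftMap B)^[q] (loopPoint hq hw) = loopPoint hq hw :=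
  Subtype.ext <| funext fun n => by
    rw [shiftMap_iterate_val]
    exact congrArg (w.getD · 0) (Nat.add_mod_right n q)

lemma ofFn_loopPoint :
    List.ofFn (fun j : Fin (q + 1) => (loopPoint hq hw).val j) = w := by
  refine List.ext_getElem (by simp [hw.1]) fun j hj _ => ?_
  rw [List.getElem_ofFn]
  simp only [List.length_ofFn] at hj
  exact (getD_mod_of_mem_loopWords hw (by omega)).trans (List.getD_eq_getElem _ _ _)

lemma exists_shiftMap_iterate_loopPoint_val_zero {x : ℕ} (hx : x ∈ w) :
    ∃ j < q, ((shiftMap B)^[j] (loopPoint hq hw)).val 0 = x := by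
  obtain ⟨j, hj, rfl⟩ := List.mem_iff_getElem.mp hx
  refine ⟨j % q, Nat.mod_lt j hq, ?_⟩
  rw [shiftMap_iterate_val, zero_add]
  show w.getD (j % q % q) 0 = _
  rw [Nat.mod_mod, getD_mod_of_mem_loopWords hw (by rw [hw.1] at hj; omega),
    List.getD_eq_getElem]

end LoopWords

section PeriodicMeasure

variable {B : ℕ → ℕ → Prop} {τ : Shift B → ℝ} (p : Shift B) {m : ℕ}

lemma periodicMeasure_univ (hm : 0 < m) : periodicMeasure B p m Set.univ = 1 := by
  simp only [periodicMeasure, Measure.smul_apply, smul_eq_mul, Measure.finsetSum_apply,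
    measure_univ, Finset.sum_const, Finset.card_range, nsmul_eq_mul, mul_one]
  exact ENNReal.inv_mul_cancel (by exact_mod_cast hm.ne') (ENNReal.natCast_ne_top m)

lemma isProbabilityMeasure_periodicMeasure (hm : 0 < m) :
    IsProbabilityMeasure (periodicMeasure B p m) :=
  ⟨periodicMeasure_univ p hm⟩

lemma integral_periodicMeasure :
    ∫ x, τ x ∂periodicMeasure B p m =
      (m : ℝ)⁻¹ * ∑ j ∈ Finset.range m, τ ((shiftMap B)^[j] p) := by
  have hint : ∀ j ∈ Finset.range m, Integrable τ (Measure.dirac ((shiftMap B)^[j] p)) :=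
    fun j _ => (integrable_congr (ae_eq_dirac τ)).2 (integrable_const _)
  rw [periodicMeasure, integral_smul_measure, integral_finsetSum_measure hint]
  simp [integral_dirac, ENNReal.toReal_inv, smul_eq_mul]

lemma div_le_integral_periodicMeasure (hτ : ∀ x, 0 ≤ τ x) {j : ℕ} (hj : j < m) :
    τ ((shiftMap B)^[j] p) / m ≤ ∫ x, τ x ∂periodicMeasure B p m := by
  rw [integral_periodicMeasure, div_eq_inv_mul]
  gcongr
  exact Finset.single_le_sum (f := fun k => τ ((shiftMap B)^[k] p)) (fun k _ => hτ _)
    (Finset.mem_range.2 hj)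

end PeriodicMeasure

section SuspMeasure

variable {B : ℕ → ℕ → Prop} {τ : Shift B → ℝ}

lemma suspMeasure_prod_Icc_le (μ : Measure (Shift B)) [IsProbabilityMeasure μ]
    (s : Set (Shift B)) (c : ℝ) :
    suspMeasure B τ μ (s ×ˢ Set.Icc 0 c) ≤
      (ENNReal.ofReal (∫ x, τ x ∂μ))⁻¹ * ENNReal.ofReal c := by
  rw [suspMeasure, Measure.smul_apply, smul_eq_mul]
  gcongr
  calc (μ.prod volume).restrict _ (s ×ˢ Set.Icc 0 c)
      ≤ μ.prod volume (Set.univ ×ˢ Set.Icc 0 c) :=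
        (Measure.restrict_le_self _).trans
          (measure_mono (Set.prod_mono (Set.subset_univ s) le_rfl))
    _ = ENNReal.ofReal c := by
        rw [Measure.prod_prod, measure_univ, one_mul, Real.volume_Icc, sub_zero]

lemma tendsto_suspMeasure_prod_Icc_nhds_zero {μ : ℕ → Measure (Shift B)}
    [∀ k, IsProbabilityMeasure (μ k)] (hμ : Tendsto (fun k => ∫ x, τ x ∂μ k) atTop atTop)
    (s : Set (Shift B)) (c : ℝ) :
    Tendsto (fun k => suspMeasure B τ (μ k) (s ×ˢ Set.Icc 0 c)) atTop (𝓝 0) := by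
  have hinv : Tendsto (fun k => (ENNReal.ofReal (∫ x, τ x ∂μ k))⁻¹) atTop (𝓝 0) := by
    simpa using (ENNReal.tendsto_ofReal_atTop.comp hμ).inv
  have hbound :=
    ENNReal.Tendsto.mul_const hinv (Or.inr ENNReal.ofReal_ne_top) (b := ENNReal.ofReal c)
  rw [zero_mul] at hbound
  exact tendsto_of_tendsto_of_tendsto_of_le_of_le tendsto_const_nhds hbound
    (fun _ => zero_le) (fun k => suspMeasure_prod_Icc_le (μ k) s c)

end SuspMeasure

lemma finite_setOf_length_eq_forall_mem_lt (n K : ℕ) :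
    {l : List ℕ | l.length = n ∧ ∀ x ∈ l, x < K}.Finite := by
  refine ((List.finite_length_eq (Fin K) n).image (List.map Fin.val)).subset ?_
  rintro l ⟨hl, hlK⟩
  refine ⟨l.attach.map fun x => ⟨x.1, hlK x.1 x.2⟩, by simpa using hl, ?_⟩
  simp [List.map_map, Function.comp_def]

lemma eventually_exists_mem_le_of_injective {u : ℕ → List ℕ} (hu : Function.Injective u)
    {n : ℕ} (hlen : ∀ k, (u k).length = n) (K : ℕ) :
    ∀ᶠ k in atTop, ∃ x ∈ u k, K ≤ x := by
  have hsmall := hu.tendsto_cofinite.eventually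
    (finite_setOf_length_eq_forall_mem_lt n K).eventually_cofinite_notMem
  rw [Nat.cofinite_eq_atTop] at hsmall
  filter_upwards [hsmall] with k hk
  simpa [hlen] using hk

/-- if there are infinitely many admissible words of length `q+1` from `i`
to `i` with `i` only at the endpoints, and `τ ∈ R`, then there is a sequence of distinct
associated periodic points whose periodic measures have `τ`-integrals tending to infinity;
hence the corresponding flow-invariant measures converge on cylinders to the zero measure. -/
theorem stmt18 (B : ℕ → ℕ → Prop) (τ : Shift B → ℝ) (hτ : ClassR B τ)
    (i q : ℕ) (hq : 0 < q) (hW : (loopWords B i q).Infinite) :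
    ∃ p : ℕ → Shift B, Function.Injective p ∧
      (∀ k, (shiftMap B)^[q] (p k) = p k ∧
        List.ofFn (fun j : Fin (q + 1) => (p k).val j) ∈ loopWords B i q) ∧
      Tendsto (fun k => ∫ x, τ x ∂(periodicMeasure B (p k) q)) atTop atTop ∧
      ∀ c : ℝ, 0 < c → (∀ x, c ≤ τ x) →
        ∀ w : List ℕ, w ≠ [] →
          Tendsto
            (fun k => suspMeasure B τ (periodicMeasure B (p k) q)
              (cyl B w ×ˢ Set.Icc 0 c)) atTop (𝓝 0) := by
  obtain ⟨-, ⟨c₀, hc₀, hτc₀⟩, -, hτ_large⟩ := hτ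
  let W : ℕ ↪ loopWords B i q := hW.natEmbedding
  let p k := loopPoint hq (W k).2
  have hW_inj : Function.Injective fun k => (W k : List ℕ) :=
    Subtype.val_injective.comp W.injective
  have hp_word k : List.ofFn (fun j : Fin (q + 1) => (p k).val j) = W k := ofFn_loopPoint hq _
  have hI : Tendsto (fun k => ∫ x, τ x ∂periodicMeasure B (p k) q) atTop atTop := by
    refine tendsto_atTop.2 fun M => ?_
    obtain ⟨K, hK⟩ := hτ_large (q * M)
    filter_upwards [eventually_exists_mem_le_of_injective hW_inj (fun k => (W k).2.1) K]
      with k ⟨x, hxW, hKx⟩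
    obtain ⟨j, hjq, hj⟩ := exists_shiftMap_iterate_loopPoint_val_zero hq (W k).2 hxW
    calc M = q * M / q := by field_simp
      _ ≤ τ ((shiftMap B)^[j] (p k)) / q := by gcongr; exact hK _ (hj ▸ hKx)
      _ ≤ _ := div_le_integral_periodicMeasure _ (fun x => hc₀.le.trans (hτc₀ x)) hjq
  have := fun k => isProbabilityMeasure_periodicMeasure (p k) hq
  refine ⟨p, fun a b hab => hW_inj ?_, fun k => ⟨shiftMap_iterate_loopPoint hq _, ?_⟩, hI,
    fun c _ _ w _ => tendsto_suspMeasure_prod_Icc_nhds_zero hI _ c⟩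
  · simp only [← hp_word, hab]
  · rw [hp_word]
    exact (W k).2
end
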